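/- arXiv:2008.12604 — 5 statements merged into one kernel-verified Lean document; each statement's English description precedes it below -/
import Mathlib

section
/- With notation as in the optimal classifier result, substituting the optimal classifier A* into the generator loss L_G = −(1/K)Σ_k Σ_y p_G(y|k)[log p_A*(k|y) − log p_A*(K+k|y)] yields L_G = (1/K)Σ_k KL(p_G(·|k) ‖ p_d(·|k)), where KL denotes the Kullback–Leibler divergence. Consequently L_G ≥ 0, with equality if and only if p_G(·|k) = p_d(·|k) for all k ∈ {1,…,K}. -/
open Real Finset

lemma gibbs_key {Y : Type*} [Fintype Y] (f g : Y → ℝ) (hf0 : ∀ y, 0 ≤ f y)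
    (hg0 : ∀ y, 0 ≤ g y) (habs : ∀ y, 0 < f y → 0 < g y) (y : Y) :
    f y * Real.log (g y / f y) ≤ g y - f y := by
  rcases eq_or_lt_of_le (hf0 y) with h | h
  · simp [← h, hg0 y]
  · have hg := habs y h
    have hlog := Real.log_le_sub_one_of_pos (div_pos hg h)
    have := mul_le_mul_of_nonneg_left hlog h.le
    calc f y * Real.log (g y / f y) ≤ f y * (g y / f y - 1) := this
      _ = g y - f y := by field_simp

lemma gibbs_key_eq {Y : Type*} [Fintype Y] (f g : Y → ℝ) (hf0 : ∀ y, 0 ≤ f y)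
    (hg0 : ∀ y, 0 ≤ g y) (habs : ∀ y, 0 < f y → 0 < g y) (y : Y) :
    f y * Real.log (g y / f y) = g y - f y ↔ f y = g y := by
  constructor
  · intro h
    rcases eq_or_lt_of_le (hf0 y) with h0 | h0
    · simp [← h0] at h ⊢; linarith
    · have hg := habs y h0
      by_contra hne
      have hne' : g y / f y ≠ 1 := by
        intro hc
        exact hne ((div_eq_one_iff_eq h0.ne').mp hc).symm
      have hlog := Real.log_lt_sub_one_of_pos (div_pos hg h0) hne'
      have := mul_lt_mul_of_pos_left hlog h0
      rw [h] at this
      have : g y - f y < g y - f y := by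
        calc g y - f y < f y * (g y / f y - 1) := this
          _ = g y - f y := by field_simp
      exact lt_irrefl _ this
  · intro h
    rcases eq_or_lt_of_le (hf0 y) with h0 | h0
    · simp [← h0, ← h]
    · rw [← h, div_self h0.ne', Real.log_one]; ring

lemma gibbs {Y : Type*} [Fintype Y] (f g : Y → ℝ) (hf0 : ∀ y, 0 ≤ f y)
    (hg0 : ∀ y, 0 ≤ g y) (hf1 : ∑ y, f y = 1) (hg1 : ∑ y, g y = 1)
    (habs : ∀ y, 0 < f y → 0 < g y) :
    0 ≤ ∑ y, f y * Real.log (f y / g y) ∧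
      ((∑ y, f y * Real.log (f y / g y)) = 0 ↔ f = g) := by
  have hneg : ∀ y, f y * Real.log (f y / g y) = -(f y * Real.log (g y / f y)) := by
    intro y
    have h : (g y / f y)⁻¹ = f y / g y := inv_div _ _
    rw [← h, Real.log_inv]
    ring
  have hsum_eq : ∑ y, (g y - f y) = 0 := by
    rw [Finset.sum_sub_distrib, hf1, hg1]; ring
  have hle : ∑ y, f y * Real.log (g y / f y) ≤ 0 := by
    rw [← hsum_eq]
    exact Finset.sum_le_sum fun y _ => gibbs_key f g hf0 hg0 habs y
  have hrw : ∑ y, f y * Real.log (f y / g y) = -∑ y, f y * Real.log (g y / f y) := by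
    rw [← Finset.sum_neg_distrib]
    exact Finset.sum_congr rfl fun y _ => hneg y
  constructor
  · rw [hrw]; linarith
  · rw [hrw]
    constructor
    · intro h
      have h0 : ∑ y, f y * Real.log (g y / f y) = ∑ y, (g y - f y) := by
        rw [hsum_eq]; linarith
      have := (Finset.sum_eq_sum_iff_of_le
        (fun y _ => gibbs_key f g hf0 hg0 habs y)).mp h0
      funext y
      exact (gibbs_key_eq f g hf0 hg0 habs y).mp (this y (Finset.mem_univ y))
    · intro h
      subst h
      have : ∀ y ∈ Finset.univ, f y * Real.log (f y / f y) = f y - f y := fun y _ =>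
        (gibbs_key_eq f f hf0 hf0 habs y).mpr rfl
      rw [Finset.sum_congr rfl this]
      simp

/-- Substituting the optimal augmented classifier into the A-StarGAN generator loss
yields the mean KL divergence over domains; hence the loss is nonnegative and vanishes
iff the generator distributions match the data distributions in every domain. -/
theorem generator_loss_is_mean_KL {Y : Type*} [Fintype Y] (K : ℕ) (hK : 1 ≤ K)
    (pd pG : Fin K → Y → ℝ)
    (hpd0 : ∀ k y, 0 ≤ pd k y) (hpd1 : ∀ k, ∑ y, pd k y = 1)
    (hpG0 : ∀ k y, 0 ≤ pG k y) (hpG1 : ∀ k, ∑ y, pG k y = 1)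
    (habs : ∀ k y, 0 < pG k y → 0 < pd k y)
    (Z' : Y → ℝ) (hZ' : ∀ y, Z' y = ∑ j, (pd j y + pG j y))
    (LG : ℝ)
    (hLG : LG = -(1 / (K : ℝ)) * ∑ k, ∑ y, pG k y *
        (Real.log (pd k y / Z' y) - Real.log (pG k y / Z' y))) :
    LG = (1 / (K : ℝ)) * ∑ k, ∑ y, pG k y * Real.log (pG k y / pd k y)
    ∧ 0 ≤ LG
    ∧ (LG = 0 ↔ ∀ k, pG k = pd k) := by
  have hKpos : (0 : ℝ) < K := by exact_mod_cast hK
  -- pointwise rewrite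
  have hpt : ∀ k y, pG k y * (Real.log (pd k y / Z' y) - Real.log (pG k y / Z' y))
      = -(pG k y * Real.log (pG k y / pd k y)) := by
    intro k y
    rcases eq_or_lt_of_le (hpG0 k y) with h0 | h0
    · simp [← h0]
    · have hd := habs k y h0
      have hZ : 0 < Z' y := by
        rw [hZ' y]
        have : pd k y + pG k y ≤ ∑ j, (pd j y + pG j y) :=
          Finset.single_le_sum (fun j _ => add_nonneg (hpd0 j y) (hpG0 j y))
            (Finset.mem_univ k)
        linarith
      rw [Real.log_div hd.ne' hZ.ne', Real.log_div h0.ne' hZ.ne',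
        Real.log_div h0.ne' hd.ne']
      ring
  have heq : LG = (1 / (K : ℝ)) * ∑ k, ∑ y, pG k y * Real.log (pG k y / pd k y) := by
    rw [hLG]
    rw [show ∀ S : ℝ, -(1 / (K:ℝ)) * S = (1 / (K:ℝ)) * (-S) from fun S => by ring]
    congr 1
    rw [← Finset.sum_neg_distrib]
    refine Finset.sum_congr rfl fun k _ => ?_
    rw [← Finset.sum_neg_distrib]
    refine Finset.sum_congr rfl fun y _ => ?_
    rw [hpt k y]; ring
  have hgibbs : ∀ k, 0 ≤ ∑ y, pG k y * Real.log (pG k y / pd k y) ∧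
      ((∑ y, pG k y * Real.log (pG k y / pd k y)) = 0 ↔ pG k = pd k) :=
    fun k => gibbs (pG k) (pd k) (hpG0 k) (hpd0 k) (hpG1 k) (hpd1 k) (habs k)
  have hSnonneg : 0 ≤ ∑ k, ∑ y, pG k y * Real.log (pG k y / pd k y) :=
    Finset.sum_nonneg fun k _ => (hgibbs k).1
  refine ⟨heq, ?_, ?_⟩
  · rw [heq]; positivity
  · rw [heq]
    constructor
    · intro h
      have hS : ∑ k, ∑ y, pG k y * Real.log (pG k y / pd k y) = 0 := by
        have h1 : (1 / (K : ℝ)) ≠ 0 := by positivity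
        exact (mul_eq_zero.mp h).resolve_left h1
      intro k
      have := (Finset.sum_eq_zero_iff_of_nonneg (fun k _ => (hgibbs k).1)).mp hS
        k (Finset.mem_univ k)
      exact ((hgibbs k).2).mp this
    · intro h
      have : ∀ k ∈ Finset.univ, ∑ y, pG k y * Real.log (pG k y / pd k y) = 0 :=
        fun k _ => ((hgibbs k).2).mpr (h k)
      rw [Finset.sum_eq_zero this]
      ring
end

section
/- Let p and q be probability mass functions on a finite set Y, and let D*(y) = p(y)/(p(y)+q(y)) where p(y)+q(y) > 0. Then Σ_y p(y) log D*(y) + Σ_y q(y) log(1 − D*(y)) = 2·JS(p, q) − 2 log 2, where JS(p,q) = (1/2)KL(p ‖ m) + (1/2)KL(q ‖ m) with m = (p+q)/2 is the Jensen–Shannon divergence. -/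
lemma aux_log_half (a b : ℝ) (ha : 0 ≤ a) (hb : 0 < b) :
    a * Real.log (a / b) = a * Real.log (a / (b / 2)) - a * Real.log 2 := by
  rcases eq_or_lt_of_le ha with h | h
  · simp [← h]
  · have h2 : a / (b / 2) = (a / b) * 2 := by rw [div_div_eq_mul_div]; ring
    rw [h2, Real.log_mul (by positivity) two_ne_zero]
    ring

/-- The optimal GAN value equals `2·JS(p,q) − 2·log 2`, where `JS` is the
Jensen–Shannon divergence with midpoint distribution `m = (p+q)/2`. -/
theorem optimal_gan_value_eq_JS {Y : Type*} [Fintype Y]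
    (p q : Y → ℝ)
    (hp0 : ∀ y, 0 ≤ p y) (hp1 : ∑ y, p y = 1)
    (hq0 : ∀ y, 0 ≤ q y) (hq1 : ∑ y, q y = 1)
    (hpq : ∀ y, 0 < p y + q y)
    (JS : ℝ)
    (hJS : JS = (1 / 2) * (∑ y, p y * Real.log (p y / ((p y + q y) / 2)))
              + (1 / 2) * (∑ y, q y * Real.log (q y / ((p y + q y) / 2)))) :
    (∑ y, p y * Real.log (p y / (p y + q y)))
      + ∑ y, q y * Real.log (1 - p y / (p y + q y))
    = 2 * JS - 2 * Real.log 2 := by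
  have h1 : ∑ y, p y * Real.log (p y / (p y + q y))
      = ∑ y, (p y * Real.log (p y / ((p y + q y) / 2)) - p y * Real.log 2) := by
    refine Finset.sum_congr rfl fun y _ => ?_
    exact aux_log_half (p y) (p y + q y) (hp0 y) (hpq y)
  have h2 : ∑ y, q y * Real.log (1 - p y / (p y + q y))
      = ∑ y, (q y * Real.log (q y / ((p y + q y) / 2)) - q y * Real.log 2) := by
    refine Finset.sum_congr rfl fun y _ => ?_
    have : 1 - p y / (p y + q y) = q y / (p y + q y) := by
      field_simp [ne_of_gt (hpq y)]
      ring
    rw [this]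
    exact aux_log_half (q y) (p y + q y) (hq0 y) (hpq y)
  rw [h1, h2, Finset.sum_sub_distrib, Finset.sum_sub_distrib,
    ← Finset.sum_mul, ← Finset.sum_mul, hp1, hq1, hJS]
  ring
end

section
/- Let p, q be probability mass functions on a finite set Y. Define V(D) = Σ_y p(y) log D(y) + Σ_y q(y) log(1 − D(y)) for D: Y → (0,1). Then sup_D V(D) ≥ −2 log 2, with equality if and only if p = q. -/
open Real Finset Filter

/-- Goodfellow's GAN optimality: the supremum over discriminators `D : Y → (0,1)`
of `V(D) = Σ p log D + Σ q log(1−D)` is at least `−2 log 2`, with equality iff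
`p = q`. -/
theorem gan_sup_ge_neg_two_log_two {Y : Type*} [Fintype Y]
    (p q : Y → ℝ)
    (hp0 : ∀ y, 0 ≤ p y) (hp1 : ∑ y, p y = 1)
    (hq0 : ∀ y, 0 ≤ q y) (hq1 : ∑ y, q y = 1) :
    -2 * Real.log 2 ≤ sSup {v : ℝ | ∃ D : Y → ℝ, (∀ y, 0 < D y ∧ D y < 1) ∧
        v = (∑ y, p y * Real.log (D y)) + ∑ y, q y * Real.log (1 - D y)}
    ∧ (sSup {v : ℝ | ∃ D : Y → ℝ, (∀ y, 0 < D y ∧ D y < 1) ∧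
        v = (∑ y, p y * Real.log (D y)) + ∑ y, q y * Real.log (1 - D y)}
        = -2 * Real.log 2 ↔ p = q) := by
  set S := {v : ℝ | ∃ D : Y → ℝ, (∀ y, 0 < D y ∧ D y < 1) ∧
      v = (∑ y, p y * Real.log (D y)) + ∑ y, q y * Real.log (1 - D y)} with hSdef
  have hlog_half : Real.log (1/2 : ℝ) = -Real.log 2 := by
    rw [one_div, Real.log_inv]
  have hmem : (-2 * Real.log 2) ∈ S := by
    refine ⟨fun _ => 1/2, fun y => ⟨by norm_num, by norm_num⟩, ?_⟩
    have h1 : (1 - 1/2 : ℝ) = 1/2 := by norm_num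
    simp only [h1, hlog_half, ← Finset.sum_mul]
    rw [hp1, hq1]; ring
  have hbdd : BddAbove S := by
    refine ⟨0, fun v hv => ?_⟩
    obtain ⟨D, hD, rfl⟩ := hv
    have h1 : ∀ y ∈ Finset.univ, p y * Real.log (D y) ≤ 0 := fun y _ =>
      mul_nonpos_of_nonneg_of_nonpos (hp0 y)
        (Real.log_nonpos (le_of_lt (hD y).1) (le_of_lt (hD y).2))
    have h2 : ∀ y ∈ Finset.univ, q y * Real.log (1 - D y) ≤ 0 := fun y _ =>
      mul_nonpos_of_nonneg_of_nonpos (hq0 y)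
        (Real.log_nonpos (by linarith [(hD y).2]) (by linarith [(hD y).1]))
    have := Finset.sum_nonpos h1
    have := Finset.sum_nonpos h2
    linarith
  have hle : -2 * Real.log 2 ≤ sSup S := le_csSup hbdd hmem
  refine ⟨hle, ?_, ?_⟩
  · -- sSup = -2log2 → p = q
    intro hsup
    by_contra hne
    -- there is y0 with p y0 ≠ q y0
    have hex : ∃ y0, p y0 ≠ q y0 := by
      by_contra h
      push_neg at h
      exact hne (funext h)
    obtain ⟨y0, hy0⟩ := hex
    set d : Y → ℝ := fun y => p y - q y with hd
    clear_value d
    have hL : 0 < 2 * ∑ y, d y ^ 2 := by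
      have : 0 < ∑ y, d y ^ 2 :=
        Finset.sum_pos' (fun y _ => sq_nonneg _)
          ⟨y0, Finset.mem_univ _, by
            have : d y0 ≠ 0 := by simp only [hd]; exact sub_ne_zero.mpr hy0
            positivity⟩
      linarith
    have hdb : ∀ y, |d y| ≤ 1 := by
      intro y
      have hpy : p y ≤ 1 := by
        rw [← hp1]
        exact Finset.single_le_sum (fun i _ => hp0 i) (Finset.mem_univ y)
      have hqy : q y ≤ 1 := by
        rw [← hq1]
        exact Finset.single_le_sum (fun i _ => hq0 i) (Finset.mem_univ y)
      rw [abs_le]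
      simp only [hd]
      constructor <;> [linarith [hp0 y]; linarith [hq0 y]]
    set g : ℝ → ℝ := fun t => (∑ y, p y * Real.log (1/2 + t * d y)) +
        ∑ y, q y * Real.log (1/2 - t * d y) with hg
    have hg0 : g 0 = -2 * Real.log 2 := by
      simp only [hg, zero_mul, add_zero, sub_zero, hlog_half, ← Finset.sum_mul]
      rw [hp1, hq1]; ring
    have hderiv : HasDerivAt g (2 * ∑ y, d y ^ 2) 0 := by
      have h1 : HasDerivAt (fun t : ℝ => ∑ y, p y * Real.log (1/2 + t * d y))
          (∑ y, p y * (2 * d y)) 0 := by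
        apply HasDerivAt.fun_sum
        intro y _
        have hinner : HasDerivAt (fun t : ℝ => 1/2 + t * d y) (1 * d y) 0 :=
          ((hasDerivAt_id (0:ℝ)).mul_const (d y)).const_add (1/2 : ℝ)
        rw [one_mul] at hinner
        have hne0 : (1/2 + (0:ℝ) * d y) ≠ 0 := by norm_num
        have := (Real.hasDerivAt_log hne0).comp 0 hinner
        refine (this.const_mul (p y)).congr_deriv ?_
        norm_num
      have h2 : HasDerivAt (fun t : ℝ => ∑ y, q y * Real.log (1/2 - t * d y))
          (∑ y, q y * (-(2 * d y))) 0 := by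
        apply HasDerivAt.fun_sum
        intro y _
        have hinner : HasDerivAt (fun t : ℝ => 1/2 - t * d y) (-(1 * d y)) 0 :=
          ((hasDerivAt_id (0:ℝ)).mul_const (d y)).const_sub (1/2 : ℝ)
        rw [one_mul] at hinner
        have hne0 : (1/2 - (0:ℝ) * d y) ≠ 0 := by norm_num
        have := (Real.hasDerivAt_log hne0).comp 0 hinner
        refine (this.const_mul (q y)).congr_deriv ?_
        norm_num
      have := h1.add h2
      refine this.congr_deriv ?_
      rw [Finset.mul_sum, ← Finset.sum_add_distrib]
      exact Finset.sum_congr rfl (fun y _ => by simp only [hd]; ring)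
    have hslope := hasDerivAt_iff_tendsto_slope.mp hderiv
    have hev : ∀ᶠ t in nhdsWithin (0:ℝ) {x | x ≠ 0}, 0 < slope g 0 t :=
      hslope.eventually (eventually_gt_nhds hL)
    have hmono : nhdsWithin (0:ℝ) (Set.Ioi 0) ≤ nhdsWithin (0:ℝ) {x | x ≠ 0} :=
      nhdsWithin_mono 0 (fun x hx => ne_of_gt hx)
    have hev' : ∀ᶠ t in nhdsWithin (0:ℝ) (Set.Ioi 0), 0 < slope g 0 t := hmono hev
    have hIoo : Set.Ioo (0:ℝ) (1/4) ∈ nhdsWithin (0:ℝ) (Set.Ioi 0) :=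
      Ioo_mem_nhdsGT_of_mem ⟨le_rfl, by norm_num⟩
    obtain ⟨t, hts, ht0, ht4⟩ := (hev'.and (eventually_of_mem hIoo (fun x hx => hx))).exists
    -- g t > g 0
    have hgt : g 0 < g t := by
      rw [slope_def_field] at hts
      rw [sub_zero] at hts
      have h := mul_pos hts ht0
      rw [div_mul_cancel₀ _ (ne_of_gt ht0)] at h
      linarith
    -- g t ∈ S
    have hgtS : g t ∈ S := by
      refine ⟨fun y => 1/2 + t * d y, fun y => ?_, ?_⟩
      · have := hdb y
        rw [abs_le] at this
        refine ⟨?_, ?_⟩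
        · show (0:ℝ) < 1/2 + t * d y
          nlinarith [mul_le_mul_of_nonneg_left this.1 ht0.le]
        · show (1:ℝ)/2 + t * d y < 1
          nlinarith [mul_le_mul_of_nonneg_left this.2 ht0.le]
      · simp only [hg]
        congr 1
        apply Finset.sum_congr rfl
        intro y _
        congr 2
        ring
    have := le_csSup hbdd hgtS
    rw [hsup] at this
    linarith [hg0 ▸ hgt]
  · -- p = q → sSup = -2log2
    rintro rfl
    refine le_antisymm (csSup_le ⟨_, hmem⟩ ?_) hle
    rintro v ⟨D, hD, rfl⟩
    have hub : ∀ y ∈ Finset.univ, p y * Real.log (D y) + p y * Real.log (1 - D y)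
        ≤ p y * (-2 * Real.log 2) := by
      intro y _
      have h1 : 0 < D y := (hD y).1
      have h2 : D y < 1 := (hD y).2
      have hpos : 0 < D y * (1 - D y) := mul_pos h1 (by linarith)
      have hle4 : D y * (1 - D y) ≤ 1/4 := by nlinarith [sq_nonneg (D y - 1/2)]
      have hlog : Real.log (D y * (1 - D y)) ≤ Real.log (1/4) :=
        Real.log_le_log hpos hle4
      have h14 : Real.log (1/4 : ℝ) = -2 * Real.log 2 := by
        rw [show (1/4:ℝ) = 2^(-2 : ℤ) by norm_num, Real.log_zpow]
        push_cast; ring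
      rw [← mul_add, ← Real.log_mul (ne_of_gt h1) (by linarith)]
      calc p y * Real.log (D y * (1 - D y)) ≤ p y * Real.log (1/4) :=
            mul_le_mul_of_nonneg_left hlog (hp0 y)
        _ = p y * (-2 * Real.log 2) := by rw [h14]
    calc (∑ y, p y * Real.log (D y)) + ∑ y, p y * Real.log (1 - D y)
        = ∑ y, (p y * Real.log (D y) + p y * Real.log (1 - D y)) := by
          rw [Finset.sum_add_distrib]
      _ ≤ ∑ y, p y * (-2 * Real.log 2) := Finset.sum_le_sum hub
      _ = -2 * Real.log 2 := by rw [← Finset.sum_mul, hp1, one_mul]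
end

section
/- Let p, q be probability mass functions on a finite set Y with disjoint supports (there is no y with p(y) > 0 and q(y) > 0). Then sup over D: Y → (0,1) of Σ_y p(y) log D(y) + Σ_y q(y) log(1 − D(y)) equals 0, and the supremum is not attained. -/
/-- When `p` and `q` have disjoint supports, the GAN objective
`V(D) = Σ p log D + Σ q log(1−D)` over `D : Y → (0,1)` has supremum `0`,
and the supremum is not attained: every admissible `D` has `V(D) < 0`, while
values arbitrarily close to `0` are achieved. -/
theorem disjoint_supports_gan_sup {Y : Type*} [Fintype Y]
    (p q : Y → ℝ)
    (hp0 : ∀ y, 0 ≤ p y) (hp1 : ∑ y, p y = 1)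
    (hq0 : ∀ y, 0 ≤ q y) (hq1 : ∑ y, q y = 1)
    (hdisj : ∀ y, ¬(0 < p y ∧ 0 < q y)) :
    (∀ D : Y → ℝ, (∀ y, 0 < D y ∧ D y < 1) →
      (∑ y, p y * Real.log (D y)) + (∑ y, q y * Real.log (1 - D y)) < 0)
    ∧ ∀ ε : ℝ, 0 < ε → ∃ D : Y → ℝ, (∀ y, 0 < D y ∧ D y < 1) ∧
      -ε < (∑ y, p y * Real.log (D y)) + ∑ y, q y * Real.log (1 - D y) := by
  constructor
  · intro D hD
    -- pick y0 with p y0 > 0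
    obtain ⟨y0, hy0⟩ : ∃ y, 0 < p y := by
      by_contra h
      push_neg at h
      have : ∑ y, p y = 0 := Finset.sum_eq_zero fun y _ => le_antisymm (h y) (hp0 y)
      rw [hp1] at this; norm_num at this
    have h1 : (∑ y, p y * Real.log (D y)) < 0 := by
      have := Finset.sum_lt_sum (g := fun _ : Y => (0 : ℝ))
        (fun i _ => mul_nonpos_of_nonneg_of_nonpos (hp0 i)
          (Real.log_nonpos (le_of_lt (hD i).1) (le_of_lt (hD i).2)))
        ⟨y0, Finset.mem_univ y0, by
          exact mul_neg_of_pos_of_neg hy0 (Real.log_neg (hD y0).1 (hD y0).2)⟩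
      simpa using this
    have h2 : (∑ y, q y * Real.log (1 - D y)) ≤ 0 := by
      apply Finset.sum_nonpos
      intro i _
      exact mul_nonpos_of_nonneg_of_nonpos (hq0 i)
        (Real.log_nonpos (by linarith [(hD i).2]) (by linarith [(hD i).1]))
    linarith
  · intro ε hε
    set t : ℝ := Real.exp (-ε / 2) with ht
    have ht0 : 0 < t := Real.exp_pos _
    have ht1 : t < 1 := by
      rw [ht]; apply Real.exp_lt_one_iff.mpr; linarith
    set δ : ℝ := (1 - t) / 2 with hδ
    have hδ0 : 0 < δ := by rw [hδ]; linarith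
    have hδ1 : δ < 1 / 2 := by rw [hδ]; linarith
    refine ⟨fun y => if 0 < p y then 1 - δ else δ, ?_, ?_⟩
    · intro y
      by_cases h : 0 < p y <;> simp [h] <;> constructor <;> linarith
    · have hlog : Real.log (1 - δ) > -ε / 2 := by
        have h1 : t < 1 - δ := by rw [hδ]; linarith
        calc -ε / 2 = Real.log t := (Real.log_exp _).symm
          _ < Real.log (1 - δ) := Real.log_lt_log ht0 h1
      have hp : (∑ y, p y * Real.log (if 0 < p y then 1 - δ else δ)) =
          ∑ y, p y * Real.log (1 - δ) := by
        apply Finset.sum_congr rfl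
        intro y _
        by_cases h : 0 < p y
        · simp [h]
        · have : p y = 0 := le_antisymm (not_lt.mp h) (hp0 y)
          simp [this]
      have hq : (∑ y, q y * Real.log (1 - if 0 < p y then 1 - δ else δ)) =
          ∑ y, q y * Real.log (1 - δ) := by
        apply Finset.sum_congr rfl
        intro y _
        by_cases h : 0 < p y
        · have : q y = 0 := by
            by_contra hq'
            exact hdisj y ⟨h, lt_of_le_of_ne (hq0 y) (Ne.symm hq')⟩
          simp [this]
        · simp [h]
      rw [hp, hq, ← Finset.sum_mul, ← Finset.sum_mul, hp1, hq1]
      linarith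
end

section
/- Let K ≥ 1 and consider the (K+1)-class variant of the augmented classifier: for probability mass functions p_d(·|k) (k=1,…,K) and p_G(·|k) on a finite set Y, the loss L(A) = −(1/K)Σ_k Σ_y p_d(y|k) log p_A(k|y) − (1/K)Σ_k Σ_y p_G(y|k) log p_A(K+1|y) over classifiers A with Σ_{j=1}^{K+1} p_A(j|y) = 1 is minimized by p_A*(k|y) = p_d(y|k)/Z(y) for k ≤ K and p_A*(K+1|y) = (Σ_k p_G(y|k))/Z(y), where Z(y) = Σ_k p_d(y|k) + Σ_k p_G(y|k). -/
/-- Gibbs' inequality with unnormalized weights. -/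
lemma gibbs_aux {ι : Type*} [Fintype ι] (w q : ι → ℝ)
    (hw : ∀ i, 0 ≤ w i) (hq : ∀ i, 0 ≤ q i) (hq1 : ∑ i, q i ≤ 1)
    (hW : 0 < ∑ i, w i) (hpos : ∀ i, 0 < w i → 0 < q i) :
    ∑ i, w i * Real.log (q i) ≤ ∑ i, w i * Real.log (w i / ∑ j, w j) := by
  set W := ∑ j, w j with hWdef
  have key : ∀ i, w i * Real.log (q i) ≤ w i * Real.log (w i / W) + (W * q i - w i) := by
    intro i
    rcases eq_or_lt_of_le (hw i) with h0 | h0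
    · rw [← h0]
      simpa using mul_nonneg hW.le (hq i)
    · have hqi := hpos i h0
      have hfrac : 0 < q i * W / w i := by positivity
      have hlog := Real.log_le_sub_one_of_pos hfrac
      have heq : Real.log (q i * W / w i) = Real.log (q i) - Real.log (w i / W) := by
        rw [Real.log_div (by positivity) (ne_of_gt h0), Real.log_mul (ne_of_gt hqi) (ne_of_gt hW),
          Real.log_div (ne_of_gt h0) (ne_of_gt hW)]
        ring
      rw [heq] at hlog
      have := mul_le_mul_of_nonneg_left hlog (le_of_lt h0)
      have hne : w i ≠ 0 := ne_of_gt h0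
      calc w i * Real.log (q i)
          = w i * (Real.log (q i) - Real.log (w i / W)) + w i * Real.log (w i / W) := by ring
        _ ≤ w i * (q i * W / w i - 1) + w i * Real.log (w i / W) := by linarith
        _ = w i * Real.log (w i / W) + (W * q i - w i) := by field_simp; ring
  calc ∑ i, w i * Real.log (q i)
      ≤ ∑ i, (w i * Real.log (w i / W) + (W * q i - w i)) := Finset.sum_le_sum fun i _ => key i
    _ = ∑ i, w i * Real.log (w i / W) + (W * (∑ i, q i) - W) := by
        rw [Finset.sum_add_distrib, Finset.sum_sub_distrib, ← Finset.mul_sum]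
    _ ≤ ∑ i, w i * Real.log (w i / W) := by nlinarith

/-- Optimal classifier for the A-StarGAN2 variant with `K+1` classes (`K` real
classes and a single merged fake class): the loss is minimized by the
normalized densities, with the fake class receiving the total generated mass. -/
theorem optimal_merged_fake_classifier {Y : Type*} [Fintype Y] (K : ℕ) (hK : 1 ≤ K)
    (pd pG : Fin K → Y → ℝ)
    (hpd0 : ∀ k y, 0 ≤ pd k y) (hpd1 : ∀ k, ∑ y, pd k y = 1)
    (hpG0 : ∀ k y, 0 ≤ pG k y) (hpG1 : ∀ k, ∑ y, pG k y = 1)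
    (Z : Y → ℝ)
    (hZ : ∀ y, Z y = (∑ k, pd k y) + ∑ k, pG k y)
    (hZpos : ∀ y, 0 < Z y)
    (Areal : Y → Fin K → ℝ) (Afake : Y → ℝ)
    (hA0 : ∀ y k, 0 ≤ Areal y k) (hA0' : ∀ y, 0 ≤ Afake y)
    (hAsum : ∀ y, (∑ k, Areal y k) + Afake y = 1)
    (hApos : ∀ y k, 0 < pd k y → 0 < Areal y k)
    (hApos' : ∀ y, 0 < (∑ k, pG k y) → 0 < Afake y) :
    (-(1 / (K : ℝ)) * ∑ k, ∑ y, pd k y * Real.log (pd k y / Z y)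
      - (1 / (K : ℝ)) * ∑ k, ∑ y, pG k y * Real.log ((∑ j, pG j y) / Z y))
    ≤ -(1 / (K : ℝ)) * ∑ k, ∑ y, pd k y * Real.log (Areal y k)
      - (1 / (K : ℝ)) * ∑ k, ∑ y, pG k y * Real.log (Afake y) := by
  have hc : (0:ℝ) < 1 / K := by
    have : (0:ℝ) < K := by exact_mod_cast Nat.lt_of_lt_of_le Nat.zero_lt_one hK
    positivity
  have key : ∀ y : Y,
      (∑ k, pd k y * Real.log (Areal y k)) + (∑ k, pG k y) * Real.log (Afake y)
      ≤ (∑ k, pd k y * Real.log (pd k y / Z y))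
        + (∑ k, pG k y) * Real.log ((∑ j, pG j y) / Z y) := by
    intro y
    have hpGy : 0 ≤ ∑ k, pG k y := Finset.sum_nonneg fun k _ => hpG0 k y
    have h := gibbs_aux (ι := Fin K ⊕ Unit)
      (Sum.elim (fun k => pd k y) (fun _ => ∑ k, pG k y))
      (Sum.elim (Areal y) (fun _ => Afake y))
      (by rintro (k | u); exacts [hpd0 k y, hpGy])
      (by rintro (k | u); exacts [hA0 y k, hA0' y])
      (by rw [Fintype.sum_sum_type]; simp [hAsum y])
      (by rw [Fintype.sum_sum_type]; simpa [← hZ y] using hZpos y)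
      (by rintro (k | u); exacts [hApos y k, fun h => hApos' y h])
    rw [Fintype.sum_sum_type, Fintype.sum_sum_type] at h
    have hWeq : (∑ j : Fin K ⊕ Unit,
        Sum.elim (fun k => pd k y) (fun _ => ∑ k, pG k y) j) = Z y := by
      rw [Fintype.sum_sum_type]; simp [hZ y]
    rw [hWeq] at h
    simpa using h
  have h1 : (∑ y, ((∑ k, pd k y * Real.log (Areal y k)) + (∑ k, pG k y) * Real.log (Afake y)))
      ≤ ∑ y, ((∑ k, pd k y * Real.log (pd k y / Z y))
        + (∑ k, pG k y) * Real.log ((∑ j, pG j y) / Z y)) :=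
    Finset.sum_le_sum fun y _ => key y
  have e1 : ∀ (f : Fin K → Y → ℝ) (g : Y → ℝ),
      (∑ k, ∑ y, f k y * g y) = ∑ y, (∑ k, f k y) * g y := by
    intro f g
    rw [Finset.sum_comm]
    exact Finset.sum_congr rfl fun y _ => (Finset.sum_mul _ _ _).symm
  have e2 : (∑ k, ∑ y, pd k y * Real.log (Areal y k))
      = ∑ y, ∑ k, pd k y * Real.log (Areal y k) := Finset.sum_comm
  have e3 : (∑ k, ∑ y, pd k y * Real.log (pd k y / Z y))
      = ∑ y, ∑ k, pd k y * Real.log (pd k y / Z y) := Finset.sum_comm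
  rw [e2, e3, e1 pG (fun y => Real.log ((∑ j, pG j y) / Z y)),
    e1 pG (fun y => Real.log (Afake y))]
  rw [Finset.sum_add_distrib, Finset.sum_add_distrib] at h1
  nlinarith [mul_le_mul_of_nonneg_left h1 (le_of_lt hc)]
end
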